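/- In any stable matching M' of the reduced HR instance G', if a non-dummy resident r is matched to a level-s hospital copy, then no hospital h on r's original preference list has an active copy at level s+2 or higher in M'. -/

import Mathlib

open Finset

attribute [local instance] Classical.propDecidable

namespace HRLQ

variable {R H : Type}

/-- Number of levels in the reduced HR instance (`T = 2` for `G'`, `T = |R|` for `G''`). -/
def ell (H : Type) [Fintype H] (T : ℕ) (qm : H → ℕ) : ℕ := T + ∑ h, qm h

/-- Dummy residents of the reduced instance: a dummy `⟨h, s, i⟩` is the `i`-th level-`s`
dummy resident corresponding to hospital `h`; levels run over `0,…,ℓ-2`, there are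
`q⁺(h)` dummies at levels `< T` and `q⁻(h)` dummies at levels `≥ T`. -/
def Dummy (H : Type) [Fintype H] (T : ℕ) (qp qm : H → ℕ) : Type :=
  {x : Σ h : H, Fin (ell H T qm) × Fin (qp h) //
    x.2.1.val ≤ ell H T qm - 2 ∧ (T ≤ x.2.1.val → x.2.2.val < qm x.1)}

noncomputable instance [Fintype H] (T : ℕ) (qp qm : H → ℕ) : Fintype (Dummy H T qp qm) := by
  classical
  unfold Dummy
  infer_instance

variable [Fintype H]

def Dummy.h {T : ℕ} {qp qm : H → ℕ} (d : Dummy H T qp qm) : H := d.1.1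
def Dummy.s {T : ℕ} {qp qm : H → ℕ} (d : Dummy H T qp qm) : ℕ := d.1.2.1.val
def Dummy.i {T : ℕ} {qp qm : H → ℕ} (d : Dummy H T qp qm) : ℕ := d.1.2.2.val

/-- Residents of the reduced instance: original residents plus dummies. -/
def Res (R H : Type) [Fintype H] (T : ℕ) (qp qm : H → ℕ) : Type := R ⊕ Dummy H T qp qm

/-- Hospitals of the reduced instance: level copies `h^s`, `s ∈ {0,…,ℓ-1}`. -/
def Hos (H : Type) [Fintype H] (T : ℕ) (qm : H → ℕ) : Type := H × Fin (ell H T qm)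

noncomputable instance [Fintype R] (T : ℕ) (qp qm : H → ℕ) : Fintype (Res R H T qp qm) := by
  unfold Res; infer_instance

instance (T : ℕ) (qm : H → ℕ) : Fintype (Hos H T qm) := by
  unfold Hos; infer_instance

/-- Capacity of the level copy `h^s`. -/
def cap (T : ℕ) (qp qm : H → ℕ) (hs : Hos H T qm) : ℕ :=
  if hs.2.val < T then qp hs.1 else qm hs.1

/-- Acceptability (edges) in the reduced instance. A level-`s` dummy of `h` is acceptable to
`h^s` and `h^{s+1}`, except that the first `q⁺(h) - q⁻(h)` dummies at level `T-1` only list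
`h^{T-1}`.  An original resident `r` is acceptable to every copy of each hospital on its list. -/
def edge (T : ℕ) (qp qm : H → ℕ) (E : R → H → Prop) :
    Res R H T qp qm → Hos H T qm → Prop
  | Sum.inl r, hs => E r hs.1
  | Sum.inr d, hs => d.h = hs.1 ∧
      (hs.2.val = d.s ∨
        (hs.2.val = d.s + 1 ∧ ¬(d.s = T - 1 ∧ d.i < qp hs.1 - qm hs.1)))

/-- Rank (smaller = better) that a dummy assigns to hospital copies. -/
noncomputable def dkey {T : ℕ} {qp qm : H → ℕ} (d : Dummy H T qp qm) (a : Hos H T qm) : ℕ :=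
  if a.1 = d.h ∧ a.2.val = d.s then 0
  else if a.1 = d.h ∧ a.2.val = d.s + 1 then 1 else 2

/-- Preferences of residents of the reduced instance over hospital copies:
an original resident prefers higher level copies, and within a level follows its original
ranking `rankR` (smaller rank = more preferred); a level-`s` dummy of `h` has list `⟨h^s, h^{s+1}⟩`. -/
def prefRes (T : ℕ) (qp qm : H → ℕ) (rankR : R → H → ℕ) :
    Res R H T qp qm → Hos H T qm → Hos H T qm → Prop
  | Sum.inl r, a, b => b.2.val < a.2.val ∨ (a.2.val = b.2.val ∧ rankR r a.1 < rankR r b.1)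
  | Sum.inr d, a, b => dkey d a < dkey d b

/-- Preference class of a resident in the list of `h^s`: level-`(s-1)` dummies of `h` first,
then original residents, then level-`s` dummies of `h`. -/
noncomputable def hclass {T : ℕ} {qp qm : H → ℕ} (hs : Hos H T qm) : Res R H T qp qm → ℕ
  | Sum.inl _ => 1
  | Sum.inr d =>
      if d.h = hs.1 ∧ 1 ≤ hs.2.val ∧ d.s = hs.2.val - 1 then 0
      else if d.h = hs.1 ∧ d.s = hs.2.val then 2 else 3

/-- Rank within a preference class. -/
def hinner {T : ℕ} {qp qm : H → ℕ} (rankH : H → R → ℕ) (hs : Hos H T qm) :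
    Res R H T qp qm → ℕ
  | Sum.inl r => rankH hs.1 r
  | Sum.inr d => d.i

/-- Preferences of hospital copies over residents of the reduced instance. -/
def prefHos (T : ℕ) (qp qm : H → ℕ) (rankH : H → R → ℕ) (hs : Hos H T qm)
    (x y : Res R H T qp qm) : Prop :=
  hclass hs x < hclass hs y ∨
    (hclass hs x = hclass hs y ∧ hinner rankH hs x < hinner rankH hs y)

variable [Fintype R]

/-- The set of residents matched to the hospital copy `hs`. -/
noncomputable def mset {T : ℕ} {qp qm : H → ℕ}
    (M : Res R H T qp qm → Option (Hos H T qm)) (hs : Hos H T qm) :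
    Finset (Res R H T qp qm) :=
  univ.filter (fun x => M x = some hs)

/-- `M` is a matching of the reduced (HR) instance: it respects acceptability and capacities. -/
def isMatchingRed (T : ℕ) (qp qm : H → ℕ) (E : R → H → Prop)
    (M : Res R H T qp qm → Option (Hos H T qm)) : Prop :=
  (∀ x hs, M x = some hs → edge T qp qm E x hs) ∧
    ∀ hs, (mset M hs).card ≤ cap T qp qm hs

/-- `(x, hs)` is a blocking pair for `M` in the reduced instance. -/
def blocksRed (T : ℕ) (qp qm : H → ℕ) (E : R → H → Prop) (rankR : R → H → ℕ)
    (rankH : H → R → ℕ) (M : Res R H T qp qm → Option (Hos H T qm))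
    (x : Res R H T qp qm) (hs : Hos H T qm) : Prop :=
  edge T qp qm E x hs ∧
    (∀ hs', M x = some hs' → prefRes T qp qm rankR x hs hs') ∧
    ((mset M hs).card < cap T qp qm hs ∨
      ∃ y ∈ mset M hs, prefHos T qp qm rankH hs x y)

/-- Stability in the reduced HR instance. -/
def stableRed (T : ℕ) (qp qm : H → ℕ) (E : R → H → Prop) (rankR : R → H → ℕ)
    (rankH : H → R → ℕ) (M : Res R H T qp qm → Option (Hos H T qm)) : Prop :=
  isMatchingRed T qp qm E M ∧ ∀ x hs, ¬ blocksRed T qp qm E rankR rankH M x hs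

/-- A hospital copy is active if it is matched to at least one non-dummy resident. -/
def active {T : ℕ} {qp qm : H → ℕ}
    (M : Res R H T qp qm → Option (Hos H T qm)) (hs : Hos H T qm) : Prop :=
  ∃ r : R, M (Sum.inl r) = some hs

/-- The matching of the original HRLQ instance obtained from a matching of the reduced
instance: `r` is matched to `h` iff `r` is matched to some level copy of `h`. -/
def mapToG {T : ℕ} {qp qm : H → ℕ}
    (M : Res R H T qp qm → Option (Hos H T qm)) : R → Option H :=
  fun r => (M (Sum.inl r)).map Prod.fst

/-- Set of residents matched to `h` in a matching of the original instance. -/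
noncomputable def msetO (N : R → Option H) (h : H) : Finset R :=
  univ.filter (fun r => N r = some h)

/-- Feasibility in the original HRLQ instance. -/
def feasibleO (E : R → H → Prop) (qp qm : H → ℕ) (N : R → Option H) : Prop :=
  (∀ r h, N r = some h → E r h) ∧
    ∀ h, qm h ≤ (msetO N h).card ∧ (msetO N h).card ≤ qp h

/-- Cardinality of a matching of the original instance. -/
noncomputable def sizeO (N : R → Option H) : ℕ :=
  (univ.filter (fun r : R => N r ≠ none)).card

/-- `r ∈ R_i`: `r` is matched to a level-`i` hospital copy (unmatched residents are in `R_0`). -/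
def inRlev {T : ℕ} {qp qm : H → ℕ}
    (M : Res R H T qp qm → Option (Hos H T qm)) (i : ℕ) (r : R) : Prop :=
  (∃ hs, M (Sum.inl r) = some hs ∧ hs.2.val = i) ∨ (M (Sum.inl r) = none ∧ i = 0)

/-- `h ∈ H_j`: the copy `h^j` is active (with the convention that a hospital matched to no
resident is placed in `H_{T-1}` if it has no lower quota and in `H_{ℓ-1}` otherwise). -/
def inHlev (T : ℕ) (qp qm : H → ℕ)
    (M : Res R H T qp qm → Option (Hos H T qm)) (j : ℕ) (h : H) : Prop :=
  (∃ s : Fin (ell H T qm), s.val = j ∧ active M (h, s)) ∨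
    ((∀ r, mapToG M r ≠ some h) ∧
      ((qm h = 0 ∧ j = T - 1) ∨ (0 < qm h ∧ j = ell H T qm - 1)))

/-- Residents matched to `h` in `Mo` but not in `N`. -/
noncomputable def Aset (Mo N : R → Option H) (h : H) : Finset R :=
  msetO Mo h \ msetO N h

/-- Residents matched to `h` in `N` but not in `Mo`. -/
noncomputable def Bset (Mo N : R → Option H) (h : H) : Finset R :=
  msetO N h \ msetO Mo h

/-- `σ h` is a correspondence chosen by hospital `h` between `N(h) ∖ Mo(h)` and
`Mo(h) ∖ N(h)`: it is injective, maps into `Mo(h) ∖ N(h)`, and pairs as many residents as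
possible (unpaired residents correspond to `⊥`). -/
def validCorr (Mo N : R → Option H) (σ : H → R → Option R) : Prop :=
  ∀ h,
    (∀ r' ∈ Bset Mo N h, ∀ r, σ h r' = some r → r ∈ Aset Mo N h) ∧
    (∀ r₁ ∈ Bset Mo N h, ∀ r₂ ∈ Bset Mo N h, ∀ r,
        σ h r₁ = some r → σ h r₂ = some r → r₁ = r₂) ∧
    ((∀ r ∈ Aset Mo N h, ∃ r' ∈ Bset Mo N h, σ h r' = some r) ∨
      (∀ r' ∈ Bset Mo N h, σ h r' ≠ none))

/-- The vote of resident `r` comparing partners `x` (in `N`) and `y` (in `Mo`):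
`1` if `r` prefers `x`, `-1` if `r` prefers `y`, `0` if they coincide. -/
noncomputable def rvote (rankR : R → H → ℕ) (r : R) (x y : Option H) : ℤ :=
  if x = y then 0
  else
    match x, y with
    | some a, some b => if rankR r a < rankR r b then 1 else -1
    | some _, none => 1
    | none, _ => -1

/-- The net vote of hospital `h` for `N` against `Mo`, given the correspondence `σ h`:
each resident of `N(h) ∖ Mo(h)` is compared with its corresponding resident of
`Mo(h) ∖ N(h)` (or with `⊥`), and each unpaired resident of `Mo(h) ∖ N(h)` contributes one
vote for `Mo`. -/
noncomputable def hvote (rankH : H → R → ℕ) (Mo N : R → Option H)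
    (σ : H → R → Option R) (h : H) : ℤ :=
  (∑ r' ∈ Bset Mo N h,
      (match σ h r' with
        | some r => if rankH h r' < rankH h r then (1 : ℤ) else -1
        | none => 1)) -
    ((Aset Mo N h).filter (fun r => ∀ r' ∈ Bset Mo N h, σ h r' ≠ some r)).card

/-- Total net vote for `N` against `Mo` (given correspondences `σ`). -/
noncomputable def totalVote (rankR : R → H → ℕ) (rankH : H → R → ℕ)
    (N Mo : R → Option H) (σ : H → R → Option R) : ℤ :=
  (∑ r : R, rvote rankR r (N r) (Mo r)) + ∑ h : H, hvote rankH Mo N σ h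

/-- `Mo` is popular among the feasible matchings of the HRLQ instance. -/
def popularAmongFeasible (E : R → H → Prop) (rankR : R → H → ℕ) (rankH : H → R → ℕ)
    (qp qm : H → ℕ) (Mo : R → Option H) : Prop :=
  ∀ N, feasibleO E qp qm N → ∀ σ, validCorr Mo N σ → totalVote rankR rankH N Mo σ ≤ 0

end HRLQ

/-! If `r` sits at level `s` and `h^t`, `t ≥ s + 2`, holds an original resident, look at the
level-`(t-1)` dummies of `h` that list `h^t`. The copy `h^t` ranks them above original
residents, so by stability each sits at `h^{t-1}` or `h^t`. None sits at `h^{t-1}`: that copy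
ranks `r` above its own level-`(t-1)` dummies, and `r` prefers the higher level `t - 1 > s`.
So they all sit at `h^t`; there are at least `cap(h^t)` of them, and together with the
original resident they overflow `h^t`. -/

namespace HRLQ

variable {R H : Type} [Fintype R] [Fintype H] {T : ℕ} {qp qm : H → ℕ}

@[simp]
lemma mem_mset {M : Res R H T qp qm → Option (Hos H T qm)} {x : Res R H T qp qm}
    {a : Hos H T qm} : x ∈ mset M a ↔ M x = some a := by
  simp [mset]

noncomputable def lowerDummies (h : H) (t : Fin (ell H T qm)) : Finset (Dummy H T qp qm) :=
  univ.filter fun d => d.h = h ∧ d.s + 1 = t.val ∧ ¬(d.s = T - 1 ∧ d.i < qp h - qm h)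

@[simp]
lemma mem_lowerDummies {h : H} {t : Fin (ell H T qm)} {d : Dummy H T qp qm} :
    d ∈ lowerDummies h t ↔
      d.h = h ∧ d.s + 1 = t.val ∧ ¬(d.s = T - 1 ∧ d.i < qp h - qm h) := by
  simp [lowerDummies]

/-- At level `T - 1` only the dummies of index `≥ q⁺(h) - q⁻(h)` list `h^T`, hence the
shift in `j`. -/
lemma cap_le_card_lowerDummies (hT : 0 < T) {h : H} (hq : qm h ≤ qp h)
    {t : Fin (ell H T qm)} (ht : 1 ≤ t.val) :
    cap T qp qm (h, t) ≤ (lowerDummies (qp := qp) h t).card := by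
  have hcap : cap T qp qm (h, t) = if t.val < T then qp h else qm h := rfl
  let j : Fin (cap T qp qm (h, t)) → ℕ := fun i => if t.val = T then qp h - qm h + i else i
  have hj_lt : ∀ i, j i < qp h := fun i => by
    have := i.2; simp only [j]; split_ifs at * <;> omega
  have hj_qm : ∀ i, T ≤ t.val - 1 → j i < qm h := fun i _ => by
    have := i.2; simp only [j]; split_ifs at * <;> omega
  let d : Fin (cap T qp qm (h, t)) → Dummy H T qp qm := fun i =>
    ⟨⟨h, ⟨t.val - 1, by omega⟩, ⟨j i, hj_lt i⟩⟩,
      by have := t.2; dsimp only; omega, hj_qm i⟩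
  calc cap T qp qm (h, t) = (univ : Finset (Fin (cap T qp qm (h, t)))).card := by simp
    _ ≤ _ := by
      refine card_le_card_of_injOn d
        (fun i _ => mem_lowerDummies.2 ⟨rfl, by show t.val - 1 + 1 = t.val; omega, ?_⟩)
        (fun a _ b _ hab => ?_)
      · show ¬(t.val - 1 = T - 1 ∧ j i < qp h - qm h)
        simp only [j]; split_ifs <;> omega
      · have hji : j a = j b := congrArg Dummy.i hab
        have := a.2; have := b.2
        simp only [j] at hji
        exact Fin.ext (by split_ifs at hji <;> omega)

lemma dkey_le_one_iff (d : Dummy H T qp qm) (a : Hos H T qm) :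
    dkey d a ≤ 1 ↔ a.1 = d.h ∧ (a.2.val = d.s ∨ a.2.val = d.s + 1) := by
  unfold dkey; split_ifs <;> grind

variable {E : R → H → Prop} {rankR : R → H → ℕ} {rankH : H → R → ℕ}
  {M : Res R H T qp qm → Option (Hos H T qm)}

lemma matched_near_of_mem_lowerDummies (hst : stableRed T qp qm E rankR rankH M)
    {r' : R} {h : H} {t : Fin (ell H T qm)} (hr' : M (Sum.inl r') = some (h, t))
    {d : Dummy H T qp qm} (hd : d ∈ lowerDummies h t) :
    ∃ a, M (Sum.inr d) = some a ∧ a.1 = h ∧ (a.2.val = d.s ∨ a.2.val = d.s + 1) := by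
  obtain ⟨rfl, hdt, hdi⟩ := mem_lowerDummies.1 hd
  by_contra! hnot
  refine hst.2 (Sum.inr d) (d.h, t) ⟨⟨rfl, Or.inr ⟨hdt.symm, hdi⟩⟩, fun a ha => ?_,
    Or.inr ⟨Sum.inl r', mem_mset.2 hr', Or.inl ?_⟩⟩
  · show dkey d (d.h, t) < dkey d a
    have hkey : dkey d (d.h, t) ≤ 1 := (dkey_le_one_iff d _).2 ⟨rfl, Or.inr hdt.symm⟩
    have hkey' : ¬ dkey d a ≤ 1 := fun h1 => by
      obtain ⟨h1, h2 | h2⟩ := (dkey_le_one_iff d a).1 h1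
      exacts [(hnot a ha h1).1 h2, (hnot a ha h1).2 h2]
    omega
  · show hclass (d.h, t) (Sum.inr d) < 1
    simp only [hclass]
    rw [if_pos ⟨trivial, by omega, by omega⟩]
    omega

lemma not_matched_own_level_dummy (hst : stableRed T qp qm E rankR rankH M) {r : R}
    {hs a : Hos H T qm} (hm : M (Sum.inl r) = some hs) (he : E r a.1)
    (hlt : hs.2.val < a.2.val) {d : Dummy H T qp qm} (hdh : d.h = a.1) (hds : d.s = a.2.val) :
    M (Sum.inr d) ≠ some a := by
  intro hd
  refine hst.2 (Sum.inl r) a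
    ⟨he, fun b hb => ?_, Or.inr ⟨Sum.inr d, mem_mset.2 hd, Or.inl ?_⟩⟩
  · obtain rfl : hs = b := Option.some.inj (hm.symm.trans hb)
    exact Or.inl hlt
  · show 1 < hclass a (Sum.inr d)
    simp only [hclass]
    rw [if_neg (by omega), if_pos ⟨hdh, hds⟩]
    omega

theorem not_active_of_level_add_two_le (hT : 0 < T) {h : H} (hq : qm h ≤ qp h)
    (hst : stableRed T qp qm E rankR rankH M) {r : R} {hs : Hos H T qm}
    (hm : M (Sum.inl r) = some hs) (he : E r h) {t : Fin (ell H T qm)}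
    (ht : hs.2.val + 2 ≤ t.val) : ¬ active M (h, t) := by
  rintro ⟨r', hr'⟩
  have hheld : ∀ d ∈ lowerDummies h t, M (Sum.inr d) = some (h, t) := by
    intro d hd
    obtain ⟨hdh, hdt, -⟩ := mem_lowerDummies.1 hd
    obtain ⟨a, ha, rfl, hlev | hlev⟩ := matched_near_of_mem_lowerDummies hst hr' hd
    · exact absurd ha (not_matched_own_level_dummy hst hm he (by omega) hdh hlev.symm)
    · rwa [show a = (a.1, t) from Prod.ext rfl (Fin.ext (by show a.2.val = t.val; omega))] at ha
  have hsub : ({r'} : Finset R).disjSum (lowerDummies h t) ⊆ mset M ((h, t) : Hos H T qm) := by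
    intro x hx
    rcases mem_disjSum.1 hx with ⟨x, hx', rfl⟩ | ⟨d, hd, rfl⟩
    · obtain rfl := mem_singleton.1 hx'
      exact mem_mset.2 hr'
    · exact mem_mset.2 (hheld d hd)
  have hcard := (card_le_card hsub).trans (hst.1.2 _)
  rw [card_disjSum, card_singleton] at hcard
  have := cap_le_card_lowerDummies hT hq (t := t) (by omega)
  omega

end HRLQ

open HRLQ Finset

/-- In any stable matching `M` of the reduced HR instance `G'`, if a non-dummy resident `r`
is matched to a level-`s` hospital copy, then no hospital `h` on `r`'s original preference
list has an active copy at level `s + 2` or higher. -/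
theorem statement8 {R H : Type} [Fintype R] [Fintype H]
    (E : R → H → Prop) (rankR : R → H → ℕ) (rankH : H → R → ℕ) (qp qm : H → ℕ)
    (hq : ∀ h, qm h ≤ qp h)
    (M : Res R H 2 qp qm → Option (Hos H 2 qm))
    (hst : stableRed 2 qp qm E rankR rankH M)
    (r : R) (hs : Hos H 2 qm) (hm : M (Sum.inl r) = some hs)
    (h : H) (he : E r h) (t : Fin (ell H 2 qm)) (ht : hs.2.val + 2 ≤ t.val) :
    ¬ active M (h, t) :=
  not_active_of_level_add_two_le (by norm_num) (hq h) hst hm he ht
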